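/- arXiv:2604.17945 — 2 statements merged into one kernel-verified Lean document; each statement's English description precedes it below -/
import Mathlib

section
/- Let m be a positive integer and for i, k in {1,...,m} define a_i^k = 0 if i + k ≤ m + 1 and a_i^k = 1 otherwise. Let τ₁ = m·t₁ + i₁ − 1 and τ₂ = m·t₂ + i₂ − 1 be nonnegative integers with t₁, t₂ ∈ ℕ and i₁, i₂ ∈ {1,...,m}. If τ₁ ≤ τ₂, then t₁ + a_{i₁}^k ≤ t₂ + a_{i₂}^k for every k ∈ {1,...,m}. -/
/-- Arrival time of machine `i` in auxiliary instance `k`. -/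
def arrival (m i k : ℕ) : ℕ := if i + k ≤ m + 1 then 0 else 1

theorem stmt_0 (m t₁ t₂ i₁ i₂ k : ℕ) (hm : 0 < m)
    (hi₁ : 1 ≤ i₁) (hi₁m : i₁ ≤ m) (hi₂ : 1 ≤ i₂) (hi₂m : i₂ ≤ m)
    (hk : 1 ≤ k) (hkm : k ≤ m)
    (hτ : m * t₁ + i₁ - 1 ≤ m * t₂ + i₂ - 1) :
    t₁ + arrival m i₁ k ≤ t₂ + arrival m i₂ k := by
  have hτ' : m * t₁ + i₁ ≤ m * t₂ + i₂ := by omega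
  rcases lt_trichotomy t₁ t₂ with h | h | h
  · have h1 : arrival m i₁ k ≤ 1 := by unfold arrival; split <;> omega
    have h2 : 0 ≤ arrival m i₂ k := Nat.zero_le _
    omega
  · subst h
    have hi : i₁ ≤ i₂ := by omega
    have : arrival m i₁ k ≤ arrival m i₂ k := by
      unfold arrival; split <;> split <;> omega
    omega
  · exfalso
    have : m * t₂ + m ≤ m * t₁ := by
      have := Nat.mul_le_mul_left m h
      rwa [Nat.mul_succ] at this
    omega
end

section
/- Let Y be a discrete random variable on the positive integers satisfying the NBUE property: E[Y − x | Y > x] ≤ E[Y] for all integers x ≥ 0 (whenever P(Y > x) > 0). Then Var[Y] ≤ E[Y]². -/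
/-!
Let `T x = ∑_{k > x} f k` and `R x = ∑_{k > x} (k - x) f k` be the tail mass and the expected
excess over `x`. Exchanging the order of summation gives `∑ₓ T x = ∑ₖ k f k = E` and
`∑ₓ R x = ∑ₖ k (k + 1) / 2 · f k = (M₂ + E) / 2`, where `M₂ = ∑ₖ k² f k`. The NBUE hypothesis says
`R x ≤ E · T x` for every `x`; summing over `x` yields `(M₂ + E) / 2 ≤ E²`, so `M₂ - E² ≤ E² - E`.
-/

open Finset

theorem hasSum_tsum_ite_lt {a : ℕ → ℕ → ℝ} (ha : ∀ k x, x < k → 0 ≤ a k x)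
    (hs : Summable fun k => ∑ x ∈ range k, a k x) :
    HasSum (fun x => ∑' k, if x < k then a k x else 0) (∑' k, ∑ x ∈ range k, a k x) := by
  set F : ℕ → ℕ → ℝ := fun k x => if x < k then a k x else 0 with hF
  have hsupp : ∀ k, ∀ x ∉ range k, F k x = 0 := fun k x hx =>
    if_neg (by simpa using hx)
  have hrow : ∀ k, ∑' x, F k x = ∑ x ∈ range k, a k x := fun k => by
    rw [tsum_eq_sum (hsupp k)]
    exact sum_congr rfl fun x hx => if_pos (mem_range.mp hx)
  have hFs : Summable (Function.uncurry F) := by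
    refine (summable_prod_of_nonneg fun p => ?_).mpr
      ⟨fun k => summable_of_ne_finset_zero (hsupp k), ?_⟩
    · simp only [Pi.zero_apply, Function.uncurry, hF]
      split_ifs with h
      exacts [ha _ _ h, le_rfl]
    · simpa only [Function.uncurry_apply_pair, hrow] using hs
  have h : HasSum (fun x => ∑' k, F k x) (∑' x, ∑' k, F k x) := hFs.prod_symm.prod.hasSum
  rwa [hFs.tsum_comm, tsum_congr hrow] at h

theorem sum_range_natCast_sub (k : ℕ) : ∑ x ∈ range k, ((k : ℝ) - x) = k * (k + 1) / 2 := by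
  induction k with
  | zero => simp
  | succ n ih =>
    simp only [sum_range_succ, sum_sub_distrib, sum_const, card_range, nsmul_eq_mul] at ih ⊢
    push_cast
    linarith

section

noncomputable def tailSum (f : ℕ → ℝ) (x : ℕ) : ℝ := ∑' k, if x < k then f k else 0

noncomputable def excessSum (f : ℕ → ℝ) (x : ℕ) : ℝ :=
  ∑' k, if x < k then ((k : ℝ) - x) * f k else 0

variable {f : ℕ → ℝ}

theorem hasSum_tailSum (hf : ∀ k, 0 ≤ f k) (h1 : Summable fun k : ℕ => (k : ℝ) * f k) :
    HasSum (tailSum f) (∑' k : ℕ, (k : ℝ) * f k) := by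
  have hrow : ∀ k, ∑ _x ∈ range k, f k = k * f k := by simp
  have h := hasSum_tsum_ite_lt (a := fun k _ => f k) (fun k _ _ => hf k)
    (by simpa only [hrow] using h1)
  simp only [hrow] at h
  exact h

theorem hasSum_excessSum (hf : ∀ k, 0 ≤ f k) (h1 : Summable fun k : ℕ => (k : ℝ) * f k)
    (h2 : Summable fun k : ℕ => (k : ℝ) ^ 2 * f k) :
    HasSum (excessSum f) ((∑' k : ℕ, (k : ℝ) ^ 2 * f k + ∑' k : ℕ, (k : ℝ) * f k) / 2) := by
  have hrow : (fun k : ℕ => ∑ x ∈ range k, ((k : ℝ) - x) * f k) =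
      fun k : ℕ => (k : ℝ) ^ 2 * f k / 2 + (k : ℝ) * f k / 2 := by
    ext k
    rw [← sum_mul, sum_range_natCast_sub]
    ring
  have hs := (h2.div_const 2).add (h1.div_const 2)
  have h := hasSum_tsum_ite_lt (a := fun k x => ((k : ℝ) - x) * f k)
    (fun k x hx => mul_nonneg (sub_nonneg.mpr (by exact_mod_cast hx.le)) (hf k)) (hrow ▸ hs)
  rwa [hrow, (h2.div_const 2).tsum_add (h1.div_const 2), tsum_div_const, tsum_div_const,
    ← add_div] at h

theorem summable_ite_lt (hf : ∀ k, 0 ≤ f k) (h1 : Summable fun k : ℕ => (k : ℝ) * f k) (x : ℕ) :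
    Summable fun k => if x < k then f k else 0 := by
  refine h1.of_nonneg_of_le (fun k => by split_ifs <;> simp [hf k]) fun k => ?_
  split_ifs with h
  · exact le_mul_of_one_le_left (hf k) (by exact_mod_cast (Nat.zero_le x).trans_lt h)
  · exact mul_nonneg k.cast_nonneg (hf k)

theorem excessSum_le_mul_tailSum (hf : ∀ k, 0 ≤ f k) {x : ℕ}
    (hs : Summable fun k => if x < k then f k else 0) {E : ℝ}
    (h : 0 < tailSum f x → excessSum f x / tailSum f x ≤ E) :
    excessSum f x ≤ E * tailSum f x := by
  have hnn : ∀ k, 0 ≤ if x < k then f k else 0 := fun k => by split_ifs <;> simp [hf k]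
  rcases (tsum_nonneg hnn).lt_or_eq with hpos | hzero
  · exact (div_le_iff₀ hpos).mp (h hpos)
  · have hvanish := (hasSum_zero_iff_of_nonneg hnn).mp (hs.hasSum_iff.mpr hzero.symm)
    have hterm : ∀ k, (if x < k then ((k : ℝ) - x) * f k else 0) = 0 := fun k => by
      have : (if x < k then f k else 0) = 0 := congrFun hvanish k
      split_ifs at this ⊢
      · rw [this, mul_zero]
      · rfl
    rw [excessSum, tsum_congr hterm, tsum_zero, tailSum, ← hzero, mul_zero]

end

theorem stmt_7_general (f : ℕ → ℝ) (hfnn : ∀ k, 0 ≤ f k)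
    (hmom1 : Summable fun k : ℕ => (k : ℝ) * f k)
    (hmom2 : Summable fun k : ℕ => (k : ℝ) ^ 2 * f k)
    (E : ℝ) (hE : E = ∑' k : ℕ, (k : ℝ) * f k)
    (hNBUE : ∀ x : ℕ,
      0 < ∑' k : ℕ, (if x < k then f k else 0) →
      (∑' k : ℕ, (if x < k then ((k : ℝ) - (x : ℝ)) * f k else 0)) /
        (∑' k : ℕ, (if x < k then f k else 0)) ≤ E) :
    (∑' k : ℕ, (k : ℝ) ^ 2 * f k) - E ^ 2 ≤ E ^ 2 := by
  have hE_nonneg : 0 ≤ E := hE ▸ tsum_nonneg fun k => mul_nonneg k.cast_nonneg (hfnn k)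
  have hexcess : (∑' k : ℕ, (k : ℝ) ^ 2 * f k + E) / 2 ≤ E * E :=
    hasSum_le (fun x => excessSum_le_mul_tailSum hfnn (summable_ite_lt hfnn hmom1 x) (hNBUE x))
      (hE ▸ hasSum_excessSum hfnn hmom1 hmom2) ((hE ▸ hasSum_tailSum hfnn hmom1).mul_left E)
  nlinarith

theorem stmt_7 (f : ℕ → ℝ) (hf0 : f 0 = 0) (hfnn : ∀ k, 0 ≤ f k)
    (hsum : Summable f) (htotal : ∑' k, f k = 1)
    (hmom1 : Summable fun k : ℕ => (k : ℝ) * f k)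
    (hmom2 : Summable fun k : ℕ => (k : ℝ) ^ 2 * f k)
    (E : ℝ) (hE : E = ∑' k : ℕ, (k : ℝ) * f k)
    (hNBUE : ∀ x : ℕ,
      0 < ∑' k : ℕ, (if x < k then f k else 0) →
      (∑' k : ℕ, (if x < k then ((k : ℝ) - (x : ℝ)) * f k else 0)) /
        (∑' k : ℕ, (if x < k then f k else 0)) ≤ E) :
    (∑' k : ℕ, (k : ℝ) ^ 2 * f k) - E ^ 2 ≤ E ^ 2 :=
  stmt_7_general f hfnn hmom1 hmom2 E hE hNBUE
end
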